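/- Let p be an odd prime, g ≥ 1, m = (p−1)/2, and c_k as above. Then for 1 ≤ i ≤ g and 1 ≤ j < g: ∑_{k=1}^{2g−1} z_k(z_k − 1)∂_k c_{ip−j} = (m·∑_{k=1}^{2g−1} z_k + g − j)·c_{ip−j} + (m − g + j + 1)·c_{ip−(j+1)} in 𝔽_p[z₁,…,z_{2g−1}]. -/

import Mathlib

/-!
Write `f = x(x - 1)∏ₖ(x - zₖ)` and `θ = ∑ₖ zₖ(zₖ - 1)∂ₖ + x(x - 1)∂ₓ`. Every linear factor of `f`
is an eigenvector of the derivation `θ`: `θ x = (x - 1)x`, `θ (x - 1) = x(x - 1)` and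
`θ (x - zₖ) = (x + zₖ - 1)(x - zₖ)`. Hence `θ(fᵐ) = m·u·fᵐ` with `u = ∑ₖ zₖ + (n + 2)x - (n + 1)`,
`n` the number of variables. Comparing coefficients of `x^(N+1)` expresses
`∑ₖ zₖ(zₖ - 1)∂ₖ c_{N+1}` through `c_{N+1}` and `c_N` over any ring. For `N + 1 = ip - j` and
`n = 2g - 1` the coefficients become the stated ones because `p = 0` and `2m + 1 = p` in `𝔽_p`;
when `ip ≤ j` both indices truncate to `0`, and `c₀ = 0` because `x ∣ f`.
-/

namespace Derivation

variable {R A : Type*} [CommRing R] [CommRing A] [Algebra R A]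

theorem apply_prod_of_apply_eq_mul (D : Derivation R A A) {ι : Type*} (s : Finset ι)
    (f u : ι → A) (h : ∀ i ∈ s, D (f i) = u i * f i) :
    D (∏ i ∈ s, f i) = (∑ i ∈ s, u i) * ∏ i ∈ s, f i := by
  classical
  induction s using Finset.induction_on with
  | empty => simp
  | insert a s ha ih =>
    rw [Finset.prod_insert ha, Finset.sum_insert ha, D.leibniz, smul_eq_mul, smul_eq_mul,
      h a (Finset.mem_insert_self a s), ih fun i hi => h i (Finset.mem_insert_of_mem hi)]
    ring

theorem apply_pow_of_apply_eq_mul (D : Derivation R A A) {a u : A} (h : D a = u * a) (n : ℕ) :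
    D (a ^ n) = (n * u) * a ^ n := by
  simpa using D.apply_prod_of_apply_eq_mul (Finset.range n) (fun _ => a) (fun _ => u)
    fun _ _ => h

open Polynomial

noncomputable def coeffwise (d : Derivation R A A) : Derivation R A[X] A[X] :=
  PolynomialModule.equivPolynomialSelf.compDer d.mapCoeffs

@[simp]
theorem coeff_coeffwise (d : Derivation R A A) (q : A[X]) (n : ℕ) :
    (d.coeffwise q).coeff n = d (q.coeff n) := rfl

@[simp]
theorem coeffwise_X (d : Derivation R A A) : d.coeffwise (X : A[X]) = 0 := by
  ext n; simp [coeff_X, apply_ite d]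

@[simp]
theorem coeffwise_C (d : Derivation R A A) (a : A) : d.coeffwise (C a) = C (d a) := by
  ext n; simp [coeff_C, apply_ite d]

end Derivation

namespace Polynomial

theorem coeff_X_mul_derivative {A : Type*} [Semiring A] (q : A[X]) (n : ℕ) :
    (X * derivative q).coeff n = n * q.coeff n := by
  cases n with
  | zero => simp
  | succ n => rw [coeff_X_mul, coeff_derivative, ← Nat.cast_succ, Nat.cast_comm]

end Polynomial

section

open Polynomial

variable (σ R : Type*) [Fintype σ] [CommRing R]

noncomputable def hyperellipticPoly : (MvPolynomial σ R)[X] :=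
  X * (X - 1) * ∏ t, (X - C (MvPolynomial.X t))

noncomputable def contiguityDerivation :
    Derivation R (MvPolynomial σ R)[X] (MvPolynomial σ R)[X] :=
  ∑ k, C (MvPolynomial.X k * (MvPolynomial.X k - 1) : MvPolynomial σ R) •
      (MvPolynomial.pderiv k).coeffwise
    + (X * (X - 1) : (MvPolynomial σ R)[X]) •
      (derivative' : Derivation (MvPolynomial σ R) _ _).restrictScalars R

variable {σ R}

theorem contiguityDerivation_apply (q : (MvPolynomial σ R)[X]) :
    contiguityDerivation σ R q
      = ∑ k, C (MvPolynomial.X k * (MvPolynomial.X k - 1)) * (MvPolynomial.pderiv k).coeffwise q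
        + X * (X - 1) * derivative q := by
  rw [contiguityDerivation, Derivation.coe_add, Pi.add_apply,
    ← Derivation.coeFnAddMonoidHom_apply, map_sum, Finset.sum_apply]
  simp

theorem contiguityDerivation_X_sub_C (k : σ) :
    contiguityDerivation σ R (X - C (MvPolynomial.X k))
      = (X + C (MvPolynomial.X k) - 1) * (X - C (MvPolynomial.X k)) := by
  classical
  simp only [contiguityDerivation_apply, map_sub, Derivation.coeffwise_X,
    Derivation.coeffwise_C, MvPolynomial.pderiv_X, Pi.single_apply, apply_ite C, map_one,
    map_zero, mul_ite, mul_one, mul_zero, Finset.sum_ite_eq, Finset.mem_univ,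
    if_true, Finset.sum_const_zero, derivative_X, derivative_C, map_mul]
  ring

theorem contiguityDerivation_hyperellipticPoly :
    contiguityDerivation σ R (hyperellipticPoly σ R)
      = (C (∑ k, MvPolynomial.X k) + ((Fintype.card σ : (MvPolynomial σ R)[X]) + 2) * X
          - ((Fintype.card σ : (MvPolynomial σ R)[X]) + 1)) * hyperellipticPoly σ R := by
  have hX : contiguityDerivation σ R X = (X - 1) * X := by
    simp [contiguityDerivation_apply]; ring
  have hX1 : contiguityDerivation σ R (X - 1) = X * (X - 1) := by
    simp [contiguityDerivation_apply]
  have hQ := (contiguityDerivation σ R).apply_prod_of_apply_eq_mul Finset.univ _ _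
    fun k _ => contiguityDerivation_X_sub_C (R := R) k
  simp only [hyperellipticPoly, Derivation.leibniz, smul_eq_mul, hX, hX1, hQ,
    Finset.sum_sub_distrib, Finset.sum_add_distrib, ← map_sum, Finset.sum_const,
    Finset.card_univ, nsmul_eq_mul]
  ring

theorem sum_mul_pderiv_coeff_hyperellipticPoly_pow (m N : ℕ) :
    ∑ k, MvPolynomial.X k * (MvPolynomial.X k - 1)
        * MvPolynomial.pderiv k ((hyperellipticPoly σ R ^ m).coeff (N + 1))
      = ((m : MvPolynomial σ R) * ∑ k, MvPolynomial.X k + ((N : MvPolynomial σ R) + 1)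
            - (m : MvPolynomial σ R) * ((Fintype.card σ : MvPolynomial σ R) + 1))
          * (hyperellipticPoly σ R ^ m).coeff (N + 1)
        + ((m : MvPolynomial σ R) * ((Fintype.card σ : MvPolynomial σ R) + 2)
            - (N : MvPolynomial σ R))
          * (hyperellipticPoly σ R ^ m).coeff N := by
  have hF := (contiguityDerivation σ R).apply_pow_of_apply_eq_mul
    contiguityDerivation_hyperellipticPoly m
  rw [contiguityDerivation_apply] at hF
  set F := hyperellipticPoly σ R ^ m
  set n : MvPolynomial σ R := (Fintype.card σ : MvPolynomial σ R)
  have hL : ∑ k, C (MvPolynomial.X k * (MvPolynomial.X k - 1))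
        * (MvPolynomial.pderiv k).coeffwise F
      = C ((m : MvPolynomial σ R) * ∑ k, MvPolynomial.X k - (m : MvPolynomial σ R) * (n + 1))
          * F
        + C ((m : MvPolynomial σ R) * (n + 2)) * (X * F)
        - X * (X * derivative F) + X * derivative F := by
    conv_rhs => simp only [n, map_sub, map_mul, map_natCast, map_add, map_ofNat, map_one]
    linear_combination hF
  have := congrArg (coeff · (N + 1)) hL
  simp only [finsetSum_coeff, coeff_C_mul, Derivation.coeff_coeffwise, coeff_add, coeff_sub,
    coeff_X_mul, coeff_derivative, coeff_X_mul_derivative] at this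
  rw [this]
  ring

end

open MvPolynomial

theorem contiguity_relation_combined_general (p : ℕ) (hp : p.Prime) (hodd : Odd p)
    (g : ℕ) (hg : 1 ≤ g) (m : ℕ) (hm : m = (p - 1) / 2)
    (c : ℕ → MvPolynomial (Fin (2 * g - 1)) (ZMod p))
    (hc : ∀ k : ℕ, c k = Polynomial.coeff
      ((Polynomial.X * (Polynomial.X - 1)
          * ∏ t : Fin (2 * g - 1), (Polynomial.X - Polynomial.C (MvPolynomial.X t))
        : Polynomial (MvPolynomial (Fin (2 * g - 1)) (ZMod p))) ^ m) k)
    (i j : ℕ) :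
    ∑ k : Fin (2 * g - 1),
        MvPolynomial.X k * (MvPolynomial.X k - 1) * pderiv k (c (i * p - j))
      = (MvPolynomial.C ((m : ZMod p)) * (∑ k : Fin (2 * g - 1), MvPolynomial.X k)
          + MvPolynomial.C ((g : ZMod p) - (j : ZMod p))) * c (i * p - j)
        + MvPolynomial.C ((m : ZMod p) - (g : ZMod p) + (j : ZMod p) + 1)
          * c (i * p - (j + 1)) := by
  obtain rfl : c = fun k => (hyperellipticPoly (Fin (2 * g - 1)) (ZMod p) ^ m).coeff k :=
    funext hc
  have hpm : 2 * m + 1 = p := by obtain ⟨t, rfl⟩ := hodd; omega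
  rcases le_or_gt (i * p) j with hle | hlt
  · have hm0 : m ≠ 0 := by have := hp.two_le; omega
    have hc0 : (hyperellipticPoly (Fin (2 * g - 1)) (ZMod p) ^ m).coeff 0 = 0 := by
      simp [Polynomial.coeff_zero_eq_eval_zero, hyperellipticPoly, hm0]
    simp [Nat.sub_eq_zero_of_le hle, Nat.sub_eq_zero_of_le (hle.trans j.le_succ), hc0]
  obtain ⟨N, hN⟩ : ∃ N, i * p - j = N + 1 := ⟨i * p - j - 1, by omega⟩
  rw [hN, show i * p - (j + 1) = N by omega, sum_mul_pderiv_coeff_hyperellipticPoly_pow]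
  set c₁ := (hyperellipticPoly (Fin (2 * g - 1)) (ZMod p) ^ m).coeff (N + 1)
  set c₀ := (hyperellipticPoly (Fin (2 * g - 1)) (ZMod p) ^ m).coeff N
  have hcard : (Fintype.card (Fin (2 * g - 1)) : MvPolynomial (Fin (2 * g - 1)) (ZMod p)) + 1
      = 2 * g := by
    rw [Fintype.card_fin]
    exact_mod_cast congrArg Nat.cast (show 2 * g - 1 + 1 = 2 * g by omega)
  have hNj : (N : MvPolynomial (Fin (2 * g - 1)) (ZMod p)) + 1 + j = i * p := by
    exact_mod_cast congrArg Nat.cast (show N + 1 + j = i * p by omega)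
  have hpm_cast : 2 * (m : MvPolynomial (Fin (2 * g - 1)) (ZMod p)) + 1 = p := by
    exact_mod_cast congrArg Nat.cast hpm
  have hp0 : (p : MvPolynomial (Fin (2 * g - 1)) (ZMod p)) = 0 := by simp
  simp only [map_natCast, map_sub, map_add, map_one]
  linear_combination (c₁ - c₀) * (hNj - (m : MvPolynomial _ (ZMod p)) * hcard
    - (g : MvPolynomial _ (ZMod p)) * hpm_cast + (i - g : MvPolynomial _ (ZMod p)) * hp0)

/-- Combined contiguity relation for the entries of the Cartier–Manin matrix:
`∑_k z_k(z_k − 1)∂_k c_{ip−j} = (m·∑_k z_k + g − j)·c_{ip−j} + (m − g + j + 1)·c_{ip−(j+1)}`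
with `m = (p−1)/2`, the coefficients being taken in `𝔽_p`. -/
theorem contiguity_relation_combined (p : ℕ) (hp : p.Prime) (hodd : Odd p)
    (g : ℕ) (hg : 1 ≤ g) (m : ℕ) (hm : m = (p - 1) / 2)
    (c : ℕ → MvPolynomial (Fin (2 * g - 1)) (ZMod p))
    (hc : ∀ k : ℕ, c k = Polynomial.coeff
      ((Polynomial.X * (Polynomial.X - 1)
          * ∏ t : Fin (2 * g - 1), (Polynomial.X - Polynomial.C (MvPolynomial.X t))
        : Polynomial (MvPolynomial (Fin (2 * g - 1)) (ZMod p))) ^ m) k)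
    (i j : ℕ) (hi1 : 1 ≤ i) (hig : i ≤ g) (hj1 : 1 ≤ j) (hjg : j < g) :
    ∑ k : Fin (2 * g - 1),
        MvPolynomial.X k * (MvPolynomial.X k - 1) * pderiv k (c (i * p - j))
      = (MvPolynomial.C ((m : ZMod p)) * (∑ k : Fin (2 * g - 1), MvPolynomial.X k)
          + MvPolynomial.C ((g : ZMod p) - (j : ZMod p))) * c (i * p - j)
        + MvPolynomial.C ((m : ZMod p) - (g : ZMod p) + (j : ZMod p) + 1)
          * c (i * p - (j + 1)) :=
  contiguity_relation_combined_general p hp hodd g hg m hm c hc i j
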